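/- Let V be a Banach space densely and continuously embedded in a Banach space E, P a metric space, and {A^{(μ)}(t)}_{t≥0}, μ∈P, families satisfying the hyperbolic conditions (Hyp1)–(Hyp3) with constants M, ω, M_V, ω_V independent of μ. Assume furthermore that for each μ∈P there is a generator Â^{(μ)} of a C₀ semigroup {Ŝ^{(μ)}(t)}_{t≥0} on E such that V is Â^{(μ)}-admissible, V ⊂ D(Â^{(μ)}), and lim_{T→+∞, ν→μ} (1/T)∫₀^T ‖A^{(ν)}(t+h) − Â^{(μ)}‖_{L(V,E)} dt = 0 uniformly with respect to h≥0. For μ∈P and λ>0 let {R^{(μ,λ)}(t,s)}_{t≥s≥0} be the evolution system determined by the family {A^{(μ)}(t/λ)}_{t≥0}. Then: (a) ‖R^{(μ,λ)}(t,s)‖ ≤ M e^{ω(t−s)} for all 0≤s≤t, μ∈P, λ>0; and (b) for every t≥0, s∈[0,t], μ∈P and ū∈E, lim_{λ→0⁺, v̄→ū, ν→μ} R^{(ν,λ)}(t,s)v̄ = Ŝ^{(μ)}(t−s)ū, where the convergence is uniform for t and s from bounded intervals. -/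

import Mathlib

open MeasureTheory Filter Set Topology

/-- An evolution system on a Banach space `E`. -/
def IsEvolutionSystem {E : Type*} [NormedAddCommGroup E] [NormedSpace ℝ E]
    (R : ℝ → ℝ → E →L[ℝ] E) : Prop :=
  (∀ t : ℝ, 0 ≤ t → R t t = ContinuousLinearMap.id ℝ E) ∧
  (∀ t s r : ℝ, 0 ≤ r → r ≤ s → s ≤ t → (R t s).comp (R s r) = R t r) ∧
  (∀ u : E, ContinuousOn (fun p : ℝ × ℝ => R p.1 p.2 u) {p : ℝ × ℝ | 0 ≤ p.2 ∧ p.2 ≤ p.1})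

/-- A `C₀` semigroup of bounded linear operators on `E`. -/
def IsC0Semigroup {E : Type*} [NormedAddCommGroup E] [NormedSpace ℝ E]
    (S : ℝ → E →L[ℝ] E) : Prop :=
  S 0 = ContinuousLinearMap.id ℝ E ∧
  (∀ t s : ℝ, 0 ≤ t → 0 ≤ s → S (t + s) = (S t).comp (S s)) ∧
  (∀ u : E, ContinuousOn (fun t : ℝ => S t u) (Set.Ici 0))

/-- The composition `S(t_{n-1})(s_{n-1}) ∘ ⋯ ∘ S(t_0)(s_0)` of members of a two-parameter
family of operators. -/
def prodOps {E : Type*} [NormedAddCommGroup E] [NormedSpace ℝ E]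
    (S : ℝ → ℝ → E →L[ℝ] E) (t s : ℕ → ℝ) : ℕ → E →L[ℝ] E
  | 0 => ContinuousLinearMap.id ℝ E
  | n + 1 => (S (t n) (s n)).comp (prodOps S t s n)

/-- Stability of a family `{S(t)}_{t ≥ 0}` of semigroups with constants `M`, `ω`:
`‖S(tₙ)(sₙ) ⋯ S(t₁)(s₁)‖ ≤ M e^{ω(s₁+⋯+sₙ)}` for `0 ≤ t₁ ≤ ⋯ ≤ tₙ` and `sᵢ ≥ 0`. -/
def IsStableFamily {E : Type*} [NormedAddCommGroup E] [NormedSpace ℝ E]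
    (S : ℝ → ℝ → E →L[ℝ] E) (M ω : ℝ) : Prop :=
  ∀ (n : ℕ) (t s : ℕ → ℝ), (∀ i, 0 ≤ t i) → (∀ i j, i ≤ j → t i ≤ t j) → (∀ i, 0 ≤ s i) →
    ‖prodOps S t s n‖ ≤ M * Real.exp (ω * ∑ i ∈ Finset.range n, s i)

/-- The hyperbolic (Kato) conditions (Hyp1)–(Hyp3) for a family `{A(t)}_{t≥0}` of generators,
relative to a continuous dense embedding `ι : V → E`. Here `S t` is the `C₀` semigroup on `E`
generated by `A(t)`, `SV t` is its restriction to `V` (admissibility), and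
`A t : V →L[ℝ] E` is the restriction of `A(t)` to `V` (so that `V ⊆ D(A(t))`). -/
structure IsHyperbolicFamily {V E : Type*}
    [NormedAddCommGroup V] [NormedSpace ℝ V]
    [NormedAddCommGroup E] [NormedSpace ℝ E]
    (iota : V →L[ℝ] E) (A : ℝ → (V →L[ℝ] E))
    (S : ℝ → ℝ → E →L[ℝ] E) (SV : ℝ → ℝ → V →L[ℝ] V)
    (M om MV omV : ℝ) : Prop where
  /-- (Hyp1): each `S t` is a `C₀` semigroup on `E`. -/
  sem_E : ∀ t : ℝ, 0 ≤ t → IsC0Semigroup (S t)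
  /-- (Hyp1)/(Hyp3): `A(t)v` is the generator of `S t` applied to `v ∈ V`. -/
  gen_on_V : ∀ t : ℝ, 0 ≤ t → ∀ v : V,
    Filter.Tendsto (fun h : ℝ => h⁻¹ • (S t h (iota v) - iota v)) (nhdsWithin 0 (Set.Ioi 0))
      (nhds (A t v))
  /-- (Hyp1): stability on `E` with constants `M`, `ω`. -/
  stable_E : IsStableFamily S M om
  /-- (Hyp2): each restricted semigroup `SV t` is a `C₀` semigroup on `V`. -/
  sem_V : ∀ t : ℝ, 0 ≤ t → IsC0Semigroup (SV t)
  /-- (Hyp2): `V` is `A(t)`-admissible, `SV t` being the restriction of `S t` to `V`. -/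
  compat : ∀ t h : ℝ, 0 ≤ t → 0 ≤ h → ∀ v : V, iota (SV t h v) = S t h (iota v)
  /-- (Hyp2): stability on `V` with constants `M_V`, `ω_V`. -/
  stable_V : IsStableFamily SV MV omV
  /-- (Hyp3): `t ↦ A(t) ∈ L(V,E)` is norm continuous on `[0,∞)`. -/
  contA : ContinuousOn A (Set.Ici 0)

/-- `R` is the evolution system determined by the hyperbolic family `{A(t)}` (with
restriction data `ι`, constants `M`, `ω`): an evolution system satisfying the exponential
bound, the forward derivative identity at `t = s` and the backward derivative identity
on `V`. -/
def IsDeterminedEvolutionSystem {V E : Type*}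
    [NormedAddCommGroup V] [NormedSpace ℝ V]
    [NormedAddCommGroup E] [NormedSpace ℝ E]
    (iota : V →L[ℝ] E) (A : ℝ → (V →L[ℝ] E)) (M om : ℝ)
    (R : ℝ → ℝ → E →L[ℝ] E) : Prop :=
  IsEvolutionSystem R ∧
  (∀ t s : ℝ, 0 ≤ s → s ≤ t → ‖R t s‖ ≤ M * Real.exp (om * (t - s))) ∧
  (∀ s : ℝ, 0 ≤ s → ∀ v : V,
    Filter.Tendsto (fun h : ℝ => h⁻¹ • (R (s + h) s (iota v) - iota v))
      (nhdsWithin 0 (Set.Ioi 0)) (nhds (A s v))) ∧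
  (∀ t : ℝ, ∀ v : V, ∀ s ∈ Set.Icc (0:ℝ) t,
    HasDerivWithinAt (fun σ : ℝ => R t σ (iota v)) (-(R t s (A s v))) (Set.Icc 0 t) s)

/-
Bound (a) is part of what it means for `R^{(μ,λ)}` to be determined by `{A^{(μ)}(t/λ)}`.
For (b), all operators involved are uniformly bounded for times in `[0, T]` and `V` is dense
in `E`, so it suffices to take `ū = ι v` with `v ∈ V`. The function
`σ ↦ R(t,σ) Ŝ(σ - s) v` has right derivative `R(t,σ) (Â - A(σ/λ)) Ŝ(σ - s) v` on `[s, t]`, hence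
`‖R(t,s) v - Ŝ(t - s) v‖ ≤ C ∫_s^t ‖A(σ/λ) - Â‖_{L(V,E)} dσ`. Substituting `σ = s + λ r` turns
this integral into `λ` times an average of `‖A(r + s/λ) - Â‖` over `[0, (t - s)/λ]`: it is at
most `ε (t - s)` once `(t - s)/λ ≥ T₀`, and at most `λ T₀ ε ≤ ε` otherwise.
-/

section

variable {E F : Type*} [NormedAddCommGroup E] [NormedSpace ℝ E]
  [NormedAddCommGroup F] [NormedSpace ℝ F]

theorem tendsto_clm_apply_of_norm_le {α : Type*} {l : Filter α} {B : α → E →L[ℝ] F}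
    {u : α → E} {x : E} {y : F} {C : ℝ} (hC : ∀ᶠ a in l, ‖B a‖ ≤ C)
    (hB : Tendsto (fun a => B a x) l (𝓝 y)) (hu : Tendsto u l (𝓝 x)) :
    Tendsto (fun a => B a (u a)) l (𝓝 y) := by
  have hdiff : Tendsto (fun a => B a (u a) - B a x) l (𝓝 0) := by
    refine squeeze_zero_norm' ?_ (by simpa using (hu.sub_const x).norm.const_mul C)
    filter_upwards [hC] with a ha
    rw [← map_sub]
    exact (B a).le_of_opNorm_le ha _
  simpa using hdiff.add hB

theorem HasDerivWithinAt.clm_apply_of_norm_le {B : ℝ → E →L[ℝ] F} {u : ℝ → E} {b : F}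
    {u' : E} {s : Set ℝ} {x C : ℝ} (hB : HasDerivWithinAt (fun y => B y (u x)) b s x)
    (hu : HasDerivWithinAt u u' s x) (hBc : ContinuousWithinAt (fun y => B y u') s x)
    (hC : ∀ y ∈ s, ‖B y‖ ≤ C) :
    HasDerivWithinAt (fun y => B y (u y)) (b + B x u') s x := by
  rw [hasDerivWithinAt_iff_tendsto_slope] at hB hu ⊢
  have hslope : Tendsto (fun y => B y (slope u x y)) (𝓝[s \ {x}] x) (𝓝 (B x u')) :=
    tendsto_clm_apply_of_norm_le (eventually_nhdsWithin_of_forall fun y hy => hC y hy.1)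
      (hBc.tendsto.mono_left (nhdsWithin_mono x sdiff_subset)) hu
  refine (hB.add hslope).congr fun y => ?_
  simp only [slope_def_module, map_smul, map_sub, ← smul_add]
  abel_nf

theorem hasDerivWithinAt_Ici_of_tendsto_generator {S : ℝ → E →L[ℝ] E} {g : ℝ → E} {r : ℝ}
    {y : E} (hg : ∀ h > 0, g (r + h) = S h (g r))
    (hy : Tendsto (fun h => h⁻¹ • (S h (g r) - g r)) (𝓝[>] 0) (𝓝 y)) :
    HasDerivWithinAt g y (Ici r) r := by
  rw [← hasDerivWithinAt_Ioi_iff_Ici, hasDerivWithinAt_iff_tendsto_slope' self_notMem_Ioi]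
  have hshift : Tendsto (fun σ => σ - r) (𝓝[>] r) (𝓝[>] 0) :=
    tendsto_nhdsWithin_of_tendsto_nhds_of_eventually_within _
      (by simpa using ((continuous_sub_right r).tendsto r).mono_left nhdsWithin_le_nhds)
      (eventually_nhdsWithin_of_forall fun σ hσ => sub_pos.2 (mem_Ioi.1 hσ))
  refine (hy.comp hshift).congr' (eventually_nhdsWithin_of_forall fun σ hσ => ?_)
  have := hg (σ - r) (sub_pos.2 hσ)
  rw [add_sub_cancel] at this
  simp [slope_def_module, this]

theorem norm_sub_le_integral_of_norm_deriv_right_le {f f' : ℝ → E} {φ : ℝ → ℝ} {a b : ℝ}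
    (hab : a ≤ b) (hf : ContinuousOn f (Icc a b))
    (hf' : ∀ x ∈ Ico a b, HasDerivWithinAt f (f' x) (Ici x) x)
    (hφ : ContinuousOn φ (Icc a b)) (bound : ∀ x ∈ Ico a b, ‖f' x‖ ≤ φ x) :
    ‖f b - f a‖ ≤ ∫ x in a..b, φ x := by
  have hint : ∀ x ∈ Icc a b, IntervalIntegrable φ volume a x := fun x hx =>
    (hφ.mono (Icc_subset_Icc_right hx.2)).intervalIntegrable_of_Icc hx.1
  have hderiv : ∀ x ∈ Ico a b,
      HasDerivWithinAt (fun u => ∫ y in a..u, φ y) (φ x) (Ici x) x := by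
    intro x hx
    have hmem : Icc a b ∈ 𝓝[>] x :=
      mem_of_superset (Ioo_mem_nhdsGT hx.2) (Ioo_subset_Icc_self.trans
        (Icc_subset_Icc_left hx.1))
    exact intervalIntegral.integral_hasDerivWithinAt_right (hint x (Ico_subset_Icc_self hx))
      ((hφ.stronglyMeasurableAtFilter_nhdsWithin measurableSet_Icc x).filter_mono
        (nhdsWithin_le_of_mem hmem))
      ((hφ x (Ico_subset_Icc_self hx)).mono_of_mem_nhdsWithin hmem)
  refine image_norm_le_of_norm_deriv_right_le_deriv_boundary' (f := fun x => f x - f a)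
    (hf.sub continuousOn_const) (fun x hx => (hf' x hx).sub_const (f a)) (by simp)
    ?_ hderiv bound (right_mem_Icc.2 hab)
  simpa [uIcc_of_le hab] using
    intervalIntegral.continuousOn_primitive_interval' (hint b (right_mem_Icc.2 hab)) left_mem_uIcc

end

theorem IsC0Semigroup.exists_norm_le {E : Type*} [NormedAddCommGroup E] [NormedSpace ℝ E]
    [CompleteSpace E] {S : ℝ → E →L[ℝ] E} (hS : IsC0Semigroup S) (T : ℝ) :
    ∃ C, ∀ r ∈ Icc 0 T, ‖S r‖ ≤ C := by
  obtain ⟨C, hC⟩ := banach_steinhaus (g := fun r : Icc (0 : ℝ) T => S r) fun x => by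
    obtain ⟨C, hC⟩ := isCompact_Icc.exists_bound_of_continuousOn
      ((hS.2.2 x).mono Icc_subset_Ici_self)
    exact ⟨C, fun r => hC r r.2⟩
  exact ⟨C, fun r hr => hC ⟨r, hr⟩⟩

namespace IsDeterminedEvolutionSystem

variable {V E : Type*} [NormedAddCommGroup V] [NormedSpace ℝ V]
  [NormedAddCommGroup E] [NormedSpace ℝ E]
  {ι : V →L[ℝ] E} {B : ℝ → V →L[ℝ] E} {M ω : ℝ} {R : ℝ → ℝ → E →L[ℝ] E}

theorem norm_le (hR : IsDeterminedEvolutionSystem ι B M ω R) {s t T : ℝ} (hs : 0 ≤ s)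
    (hst : s ≤ t) (htT : t ≤ T) : ‖R t s‖ ≤ |M| * Real.exp (|ω| * T) := by
  refine (hR.2.1 t s hs hst).trans (mul_le_mul (le_abs_self M) ?_ (Real.exp_pos _).le
    (abs_nonneg M))
  rw [Real.exp_le_exp]
  calc ω * (t - s) ≤ |ω| * (t - s) := mul_le_mul_of_nonneg_right (le_abs_self ω) (by linarith)
    _ ≤ |ω| * T := by gcongr; linarith

theorem norm_sub_semigroup_le_integral (hR : IsDeterminedEvolutionSystem ι B M ω R)
    (hB : ContinuousOn B (Ici 0)) {S : ℝ → E →L[ℝ] E} {SV : ℝ → V →L[ℝ] V} {A : V →L[ℝ] E}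
    (hS : IsC0Semigroup S) (hSV : IsC0Semigroup SV)
    (hcompat : ∀ h : ℝ, 0 ≤ h → ∀ v, ι (SV h v) = S h (ι v))
    (hgen : ∀ v, Tendsto (fun h : ℝ => h⁻¹ • (S h (ι v) - ι v)) (𝓝[>] 0) (𝓝 (A v)))
    {v : V} {s t C K : ℝ} (hs : 0 ≤ s) (hst : s ≤ t) (hC : ∀ σ ∈ Icc s t, ‖R t σ‖ ≤ C)
    (hK : ∀ r ∈ Icc 0 (t - s), ‖SV r v‖ ≤ K) :
    ‖R t s (ι v) - S (t - s) (ι v)‖ ≤ C * K * ∫ σ in s..t, ‖B σ - A‖ := by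
  set w : ℝ → V := fun σ => SV (σ - s) v
  set f : ℝ → E := fun σ => R t σ (ι (w σ))
  have hw : ∀ σ, s ≤ σ → ι (w σ) = S (σ - s) (ι v) := fun σ hσ =>
    hcompat _ (sub_nonneg.2 hσ) v
  have hwcont : ContinuousOn (fun σ => ι (w σ)) (Icc s t) :=
    ι.continuous.comp_continuousOn ((hSV.2.2 v).comp (continuousOn_id.sub continuousOn_const)
      fun σ hσ => sub_nonneg.2 hσ.1)
  have hRcont : ∀ x, ContinuousOn (fun σ => R t σ x) (Icc s t) := fun x =>
    (hR.1.2.2 x).comp (continuousOn_const.prodMk continuousOn_id)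
      fun σ hσ => ⟨hs.trans hσ.1, hσ.2⟩
  have hf : ContinuousOn f (Icc s t) := fun σ hσ =>
    tendsto_clm_apply_of_norm_le (eventually_nhdsWithin_of_forall hC) (hRcont _ σ hσ)
      (hwcont σ hσ)
  have hw' : ∀ σ, s ≤ σ → HasDerivWithinAt (fun σ => ι (w σ)) (A (w σ)) (Ici σ) σ :=
    fun σ hσ => hasDerivWithinAt_Ici_of_tendsto_generator (S := S) (fun h hh => by
      rw [hw _ (by linarith), hw σ hσ, show σ + h - s = h + (σ - s) by ring,
        hS.2.1 h _ hh.le (sub_nonneg.2 hσ)]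
      rfl) (hgen (w σ))
  have hf' : ∀ σ ∈ Ico s t, HasDerivWithinAt f (R t σ ((A - B σ) (w σ))) (Ici σ) σ := by
    intro σ hσ
    have hRσ : HasDerivWithinAt (fun τ => R t τ (ι (w σ))) (-(R t σ (B σ (w σ))))
        (Icc σ t) σ :=
      (hR.2.2.2 t (w σ) σ ⟨hs.trans hσ.1, hσ.2.le⟩).mono (Icc_subset_Icc_left (hs.trans hσ.1))
    have hprod := hRσ.clm_apply_of_norm_le ((hw' σ hσ.1).mono Icc_subset_Ici_self)
      ((hRcont _ σ (Ico_subset_Icc_self hσ)).mono (Icc_subset_Icc_left hσ.1))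
      fun τ hτ => hC τ ⟨hσ.1.trans hτ.1, hτ.2⟩
    refine (hprod.mono_of_mem_nhdsWithin (Icc_mem_nhdsGE hσ.2)).congr_deriv ?_
    simp only [sub_apply, map_sub]
    abel
  have hC0 : 0 ≤ C := (norm_nonneg _).trans (hC t ⟨hst, le_rfl⟩)
  have hbound : ∀ σ ∈ Ico s t, ‖R t σ ((A - B σ) (w σ))‖ ≤ C * K * ‖B σ - A‖ := by
    intro σ hσ
    calc ‖R t σ ((A - B σ) (w σ))‖ ≤ C * ‖(A - B σ) (w σ)‖ :=
          (R t σ).le_of_opNorm_le (hC σ (Ico_subset_Icc_self hσ)) _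
      _ ≤ C * (‖A - B σ‖ * K) := by
          gcongr
          exact (A - B σ).le_opNorm_of_le (hK _ ⟨sub_nonneg.2 hσ.1, by linarith [hσ.2]⟩)
      _ = C * K * ‖B σ - A‖ := by rw [norm_sub_rev]; ring
  have hφ : ContinuousOn (fun σ => C * K * ‖B σ - A‖) (Icc s t) :=
    (continuousOn_const.mul (hB.sub continuousOn_const).norm).mono fun σ hσ => hs.trans hσ.1
  calc ‖R t s (ι v) - S (t - s) (ι v)‖ = ‖f t - f s‖ := by
        rw [norm_sub_rev, ← hw t hst]
        simp [f, w, hR.1.1 t (hs.trans hst), hSV.1]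
    _ ≤ ∫ σ in s..t, C * K * ‖B σ - A‖ :=
        norm_sub_le_integral_of_norm_deriv_right_le hst hf hf' hφ hbound
    _ = C * K * ∫ σ in s..t, ‖B σ - A‖ := intervalIntegral.integral_const_mul _ _

end IsDeterminedEvolutionSystem

theorem integral_comp_div_le_of_average_le {F : ℝ → ℝ} (hF0 : 0 ≤ F)
    (hF : ContinuousOn F (Ici 0)) {ε T₀ lam s t : ℝ} (hT₀ : 0 < T₀)
    (havg : ∀ T, T₀ ≤ T → ∀ h : ℝ, 0 ≤ h → 1 / T * ∫ r in (0 : ℝ)..T, F (r + h) ≤ ε)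
    (hlam : 0 < lam) (hlamT₀ : lam * T₀ ≤ 1) (hs : 0 ≤ s) (hst : s ≤ t) :
    ∫ σ in s..t, F (σ / lam) ≤ ε * (t - s + 1) := by
  set h := s / lam
  set τ := (t - s) / lam
  have hh : 0 ≤ h := div_nonneg hs hlam.le
  have hτ : 0 ≤ τ := div_nonneg (sub_nonneg.2 hst) hlam.le
  have hrescale : ∫ σ in s..t, F (σ / lam) = lam * ∫ r in (0 : ℝ)..τ, F (r + h) := by
    rw [intervalIntegral.integral_comp_div _ hlam.ne', intervalIntegral.integral_comp_add_right,
      zero_add, smul_eq_mul, ← add_div, sub_add_cancel]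
  have hI : ∀ T, T₀ ≤ T → ∫ r in (0 : ℝ)..T, F (r + h) ≤ ε * T := fun T hT => by
    have := havg T hT h hh
    rwa [one_div_mul_eq_div, div_le_iff₀ (hT₀.trans_le hT)] at this
  have hε : 0 ≤ ε := (mul_nonneg (by positivity)
    (intervalIntegral.integral_nonneg hT₀.le fun r _ => hF0 _)).trans (havg T₀ le_rfl 0 le_rfl)
  rw [hrescale]
  rcases le_total T₀ τ with hτT₀ | hτT₀
  · calc lam * ∫ r in (0 : ℝ)..τ, F (r + h) ≤ lam * (ε * τ) := by gcongr; exact hI τ hτT₀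
      _ = ε * (t - s) := by simp only [τ]; field_simp
      _ ≤ ε * (t - s + 1) := by gcongr; linarith
  · have hint : IntervalIntegrable (fun r => F (r + h)) volume 0 T₀ :=
      ((hF.comp (continuousOn_id.add continuousOn_const) fun r hr => add_nonneg hr hh).mono
        Icc_subset_Ici_self).intervalIntegrable_of_Icc hT₀.le
    calc lam * ∫ r in (0 : ℝ)..τ, F (r + h) ≤ lam * ∫ r in (0 : ℝ)..T₀, F (r + h) := by
          gcongr
          exact intervalIntegral.integral_mono_interval le_rfl hτ hτT₀
            (ae_of_all _ fun r => hF0 (r + h)) hint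
      _ ≤ lam * (ε * T₀) := by gcongr; exact hI T₀ le_rfl
      _ = ε * (lam * T₀) := by ring
      _ ≤ ε * (t - s + 1) := by gcongr; linarith

theorem ContinuousLinearMap.norm_apply_sub_apply_le {𝕜 E F : Type*} [NontriviallyNormedField 𝕜]
    [NormedAddCommGroup E] [NormedSpace 𝕜 E] [NormedAddCommGroup F] [NormedSpace 𝕜 F]
    (X Y : E →L[𝕜] F) (a b c : E) :
    ‖X a - Y b‖ ≤ ‖X‖ * ‖a - c‖ + ‖X c - Y c‖ + ‖Y‖ * ‖c - b‖ :=
  calc ‖X a - Y b‖ = ‖X (a - c) + (X c - Y c) + Y (c - b)‖ := by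
        simp only [map_sub]; abel_nf
    _ ≤ ‖X (a - c)‖ + ‖X c - Y c‖ + ‖Y (c - b)‖ := norm_add₃_le
    _ ≤ ‖X‖ * ‖a - c‖ + ‖X c - Y c‖ + ‖Y‖ * ‖c - b‖ := by
        gcongr <;> exact ContinuousLinearMap.le_opNorm _ _

theorem linear_averaging_on_range {V E P : Type*} [NormedAddCommGroup V] [NormedSpace ℝ V]
    [NormedAddCommGroup E] [NormedSpace ℝ E] [MetricSpace P] {ι : V →L[ℝ] E}
    {A : P → ℝ → V →L[ℝ] E} (hA : ∀ ν, ContinuousOn (A ν) (Ici 0)) {μ : P}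
    {S : ℝ → E →L[ℝ] E} {SV : ℝ → V →L[ℝ] V} {Ah : V →L[ℝ] E}
    (hS : IsC0Semigroup S) (hSV : IsC0Semigroup SV)
    (hcompat : ∀ h : ℝ, 0 ≤ h → ∀ v, ι (SV h v) = S h (ι v))
    (hgen : ∀ v, Tendsto (fun h : ℝ => h⁻¹ • (S h (ι v) - ι v)) (𝓝[>] 0) (𝓝 (Ah v)))
    (havg : ∀ ε > (0 : ℝ), ∃ T₀ > (0 : ℝ), ∃ δ > (0 : ℝ), ∀ T : ℝ, T₀ ≤ T →
      ∀ ν : P, dist ν μ ≤ δ → ∀ h : ℝ, 0 ≤ h →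
        (1 / T) * (∫ r in (0 : ℝ)..T, ‖A ν (r + h) - Ah‖) ≤ ε)
    {M ω : ℝ} {R : P → ℝ → ℝ → ℝ → E →L[ℝ] E}
    (hR : ∀ ν lam, 0 < lam → IsDeterminedEvolutionSystem ι (fun r => A ν (r / lam)) M ω (R ν lam))
    (v : V) {T : ℝ} (hT : 0 ≤ T) {ε : ℝ} (hε : 0 < ε) :
    ∃ δ > 0, ∀ ν lam, dist ν μ < δ → 0 < lam → lam < δ → ∀ t s : ℝ, 0 ≤ s → s ≤ t → t ≤ T →
      ‖R ν lam t s (ι v) - S (t - s) (ι v)‖ ≤ ε := by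
  obtain ⟨K, hK⟩ := isCompact_Icc.exists_bound_of_continuousOn
    ((hSV.2.2 v).mono (Icc_subset_Ici_self : Icc 0 T ⊆ Ici 0))
  have hK0 : 0 ≤ K := (norm_nonneg _).trans (hK 0 ⟨le_rfl, hT⟩)
  set C := |M| * Real.exp (|ω| * T)
  set ε' := ε / (C * K * (T + 1) + 1)
  obtain ⟨T₀, hT₀, δ₀, hδ₀, havg'⟩ := havg ε' (by positivity)
  refine ⟨min δ₀ (1 / T₀), by positivity, fun ν lam hν hlam hlamδ t s hs hst htT => ?_⟩
  have hlamT₀ : lam * T₀ ≤ 1 := by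
    have := hlamδ.le.trans (min_le_right _ _)
    rwa [le_div_iff₀ hT₀] at this
  calc ‖R ν lam t s (ι v) - S (t - s) (ι v)‖
        ≤ C * K * ∫ σ in s..t, ‖A ν (σ / lam) - Ah‖ :=
        (hR ν lam hlam).norm_sub_semigroup_le_integral
          ((hA ν).comp (continuousOn_id.div_const lam) fun r hr => div_nonneg hr hlam.le)
          hS hSV hcompat hgen hs hst (fun σ hσ => (hR ν lam hlam).norm_le (hs.trans hσ.1) hσ.2 htT)
          fun r hr => hK r ⟨hr.1, by linarith [hr.2]⟩
    _ ≤ C * K * (ε' * (t - s + 1)) := by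
        gcongr
        exact integral_comp_div_le_of_average_le (F := fun r => ‖A ν r - Ah‖)
          (fun r => norm_nonneg _) ((hA ν).sub continuousOn_const).norm hT₀
          (fun T' hT' h hh => havg' T' hT' ν (hν.le.trans (min_le_left _ _)) h hh)
          hlam hlamT₀ hs hst
    _ ≤ C * K * (ε' * (T + 1)) := by gcongr; linarith
    _ ≤ ε' * (C * K * (T + 1) + 1) := by nlinarith [show 0 < ε' by positivity]
    _ = ε := div_mul_cancel₀ _ (by positivity)

theorem linear_averaging_hyperbolic_general
    {V E : Type*} [NormedAddCommGroup V] [NormedSpace ℝ V]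
    [NormedAddCommGroup E] [NormedSpace ℝ E] [CompleteSpace E]
    {P : Type*} [MetricSpace P]
    (iota : V →L[ℝ] E) (hdense : DenseRange iota)
    (A : P → ℝ → (V →L[ℝ] E)) (S : P → ℝ → ℝ → E →L[ℝ] E) (SV : P → ℝ → ℝ → V →L[ℝ] V)
    (M om MV omV : ℝ)
    (hhyp : ∀ μ : P, IsHyperbolicFamily iota (A μ) (S μ) (SV μ) M om MV omV)
    -- the limit generators Â^{(μ)} with their C₀ semigroups; V is Â^{(μ)}-admissible
    -- and V ⊆ D(Â^{(μ)}), `Ahat μ` being the restriction of Â^{(μ)} to V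
    (Shat : P → ℝ → E →L[ℝ] E) (hShat : ∀ μ : P, IsC0Semigroup (Shat μ))
    (SVhat : P → ℝ → V →L[ℝ] V) (hSVhat : ∀ μ : P, IsC0Semigroup (SVhat μ))
    (hcompat : ∀ (μ : P) (h : ℝ), 0 ≤ h → ∀ v : V, iota (SVhat μ h v) = Shat μ h (iota v))
    (Ahat : P → (V →L[ℝ] E))
    (hgen : ∀ (μ : P) (v : V),
      Tendsto (fun h : ℝ => h⁻¹ • (Shat μ h (iota v) - iota v)) (𝓝[>] 0) (𝓝 (Ahat μ v)))
    -- the averaging hypothesis (3.2)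
    (havg : ∀ μ : P, ∀ ε > (0:ℝ), ∃ T₀ > (0:ℝ), ∃ δ > (0:ℝ), ∀ T : ℝ, T₀ ≤ T →
      ∀ ν : P, dist ν μ ≤ δ → ∀ h : ℝ, 0 ≤ h →
        (1 / T) * (∫ r in (0:ℝ)..T, ‖A ν (r + h) - Ahat μ‖) ≤ ε)
    -- the evolution systems determined by the rescaled families {A^{(μ)}(t/λ)}
    (Rlam : P → ℝ → ℝ → ℝ → E →L[ℝ] E)
    (hRlam : ∀ (μ : P) (lam : ℝ), 0 < lam →
      IsDeterminedEvolutionSystem iota (fun r => A μ (r / lam)) M om (Rlam μ lam)) :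
    -- (a) the uniform exponential bound
    (∀ (μ : P) (lam : ℝ), 0 < lam → ∀ t s : ℝ, 0 ≤ s → s ≤ t →
      ‖Rlam μ lam t s‖ ≤ M * Real.exp (om * (t - s))) ∧
    -- (b) the strong convergence to the averaged semigroup
    (∀ (μ : P) (u0 : E) (T : ℝ), 0 < T → ∀ ε > (0:ℝ), ∃ δ > (0:ℝ),
      ∀ (ν : P) (lam : ℝ) (v : E), dist ν μ < δ → 0 < lam → lam < δ → ‖v - u0‖ < δ →
        ∀ t s : ℝ, 0 ≤ s → s ≤ t → t ≤ T →
          ‖Rlam ν lam t s v - Shat μ (t - s) u0‖ ≤ ε) := by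
  refine ⟨fun μ lam hlam => (hRlam μ lam hlam).2.1, ?_⟩
  intro μ u0 T hT ε hε
  obtain ⟨CS, hCS⟩ := (hShat μ).exists_norm_le T
  have hCS0 : 0 ≤ CS := (norm_nonneg _).trans (hCS 0 ⟨le_rfl, hT.le⟩)
  set CR := |M| * Real.exp (|om| * T)
  set η := ε / (2 * (2 * CR + CS + 1))
  have hη : 0 < η := by positivity
  obtain ⟨v, hv⟩ := hdense.exists_dist_lt u0 hη
  obtain ⟨δ, hδ, hV⟩ := linear_averaging_on_range (fun ν => (hhyp ν).contA) (hShat μ)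
    (hSVhat μ) (hcompat μ) (hgen μ) (havg μ) hRlam v hT.le (half_pos hε)
  refine ⟨min δ η, lt_min hδ hη, fun ν lam w hν hlam hlamδ hw t s hs hst htT => ?_⟩
  have hwv : ‖w - iota v‖ ≤ 2 * η := by
    have := norm_sub_le_norm_sub_add_norm_sub w u0 (iota v)
    rw [← dist_eq_norm u0] at this
    linarith [hw.trans_le (min_le_right _ _)]
  calc ‖Rlam ν lam t s w - Shat μ (t - s) u0‖
        ≤ ‖Rlam ν lam t s‖ * ‖w - iota v‖
          + ‖Rlam ν lam t s (iota v) - Shat μ (t - s) (iota v)‖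
          + ‖Shat μ (t - s)‖ * ‖iota v - u0‖ :=
        (Rlam ν lam t s).norm_apply_sub_apply_le _ _ _ _
    _ ≤ CR * (2 * η) + ε / 2 + CS * η := by
        gcongr
        · exact (hRlam ν lam hlam).norm_le hs hst htT
        · exact hV ν lam (hν.trans_le (min_le_left _ _)) hlam (hlamδ.trans_le (min_le_left _ _))
            t s hs hst htT
        · exact hCS _ ⟨sub_nonneg.2 hst, by linarith⟩
        · rw [← dist_eq_norm, dist_comm]
          exact hv.le
    _ ≤ ε := by
        have : (2 * CR + CS + 1) * η = ε / 2 := by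
          have : 2 * CR + CS + 1 ≠ 0 := by positivity
          simp only [η]
          field_simp
        nlinarith

/-- Theorem 3.4 (linear averaging principle for hyperbolic evolution systems): if the
time averages of `A^{(ν)}(·+h)` converge to `Â^{(μ)}` in `L(V,E)` (uniformly in `h ≥ 0`),
then the evolution systems `R^{(μ,λ)}` determined by `{A^{(μ)}(t/λ)}` satisfy the uniform
bound `M e^{ω(t−s)}` and converge strongly to the semigroup `Ŝ^{(μ)}`, uniformly for
`t, s` from bounded intervals. -/
theorem linear_averaging_hyperbolic
    {V E : Type*} [NormedAddCommGroup V] [NormedSpace ℝ V] [CompleteSpace V]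
    [NormedAddCommGroup E] [NormedSpace ℝ E] [CompleteSpace E]
    {P : Type*} [MetricSpace P]
    (iota : V →L[ℝ] E) (hinj : Function.Injective iota) (hdense : DenseRange iota)
    (A : P → ℝ → (V →L[ℝ] E)) (S : P → ℝ → ℝ → E →L[ℝ] E) (SV : P → ℝ → ℝ → V →L[ℝ] V)
    (M om MV omV : ℝ) (hM : 1 ≤ M) (hMV : 1 ≤ MV)
    (hhyp : ∀ μ : P, IsHyperbolicFamily iota (A μ) (S μ) (SV μ) M om MV omV)
    -- the limit generators Â^{(μ)} with their C₀ semigroups; V is Â^{(μ)}-admissible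
    -- and V ⊆ D(Â^{(μ)}), `Ahat μ` being the restriction of Â^{(μ)} to V
    (Shat : P → ℝ → E →L[ℝ] E) (hShat : ∀ μ : P, IsC0Semigroup (Shat μ))
    (SVhat : P → ℝ → V →L[ℝ] V) (hSVhat : ∀ μ : P, IsC0Semigroup (SVhat μ))
    (hcompat : ∀ (μ : P) (h : ℝ), 0 ≤ h → ∀ v : V, iota (SVhat μ h v) = Shat μ h (iota v))
    (Ahat : P → (V →L[ℝ] E))
    (hgen : ∀ (μ : P) (v : V),
      Tendsto (fun h : ℝ => h⁻¹ • (Shat μ h (iota v) - iota v)) (𝓝[>] 0) (𝓝 (Ahat μ v)))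
    -- the averaging hypothesis (3.2)
    (havg : ∀ μ : P, ∀ ε > (0:ℝ), ∃ T₀ > (0:ℝ), ∃ δ > (0:ℝ), ∀ T : ℝ, T₀ ≤ T →
      ∀ ν : P, dist ν μ ≤ δ → ∀ h : ℝ, 0 ≤ h →
        (1 / T) * (∫ r in (0:ℝ)..T, ‖A ν (r + h) - Ahat μ‖) ≤ ε)
    -- the evolution systems determined by the rescaled families {A^{(μ)}(t/λ)}
    (Rlam : P → ℝ → ℝ → ℝ → E →L[ℝ] E)
    (hRlam : ∀ (μ : P) (lam : ℝ), 0 < lam →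
      IsDeterminedEvolutionSystem iota (fun r => A μ (r / lam)) M om (Rlam μ lam)) :
    -- (a) the uniform exponential bound
    (∀ (μ : P) (lam : ℝ), 0 < lam → ∀ t s : ℝ, 0 ≤ s → s ≤ t →
      ‖Rlam μ lam t s‖ ≤ M * Real.exp (om * (t - s))) ∧
    -- (b) the strong convergence to the averaged semigroup
    (∀ (μ : P) (u0 : E) (T : ℝ), 0 < T → ∀ ε > (0:ℝ), ∃ δ > (0:ℝ),
      ∀ (ν : P) (lam : ℝ) (v : E), dist ν μ < δ → 0 < lam → lam < δ → ‖v - u0‖ < δ →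
        ∀ t s : ℝ, 0 ≤ s → s ≤ t → t ≤ T →
          ‖Rlam ν lam t s v - Shat μ (t - s) u0‖ ≤ ε) :=
  linear_averaging_hyperbolic_general iota hdense A S SV M om MV omV hhyp Shat hShat SVhat hSVhat
    hcompat Ahat hgen havg Rlam hRlam
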